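/- arXiv:1501.00689 — 5 statements merged into one kernel-verified Lean document; each statement's English description precedes it below -/
import Mathlib

section
/- Let L and L' be limit operators on a set X, with derived topologies τ_L and τ_{L'} respectively. If L is of first order and τ_L ⊆ τ_{L'}, then L'(σ) ⊆ L(σ) for every sequence σ in X. -/
open Set Filter Topology

universe u

/-- A limit operator on `X`: a map from sequences to sets of "limits",
compatible with subsequences. -/
def IsLimitOp {X : Type u} (L : (ℕ → X) → Set X) : Prop :=
  ∀ (σ : ℕ → X) (φ : ℕ → ℕ), StrictMono φ → L σ ⊆ L (σ ∘ φ)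

/-- `C` is sequentially closed with respect to the limit operator `L`. -/
def SeqClosedFor {X : Type u} (L : (ℕ → X) → Set X) (C : Set X) : Prop :=
  ∀ σ : ℕ → X, (∀ n, σ n ∈ C) → L σ ⊆ C

/-- The topology derived from a limit operator `L`: its closed sets are exactly
the sets `C` such that `L σ ⊆ C` for every sequence `σ` with values in `C`. -/
def derivedTop {X : Type u} (L : (ℕ → X) → Set X) (hL : IsLimitOp L) :
    TopologicalSpace X :=
  TopologicalSpace.ofClosed {C | SeqClosedFor L C}
    (fun σ h => absurd (h 0) (Set.notMem_empty _))
    (fun A hA σ hσ p hp => by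
      rw [Set.mem_sInter]
      intro C hC
      exact hA hC σ (fun n => Set.mem_sInter.mp (hσ n) C hC) hp)
    (by
      intro C hC B hB σ hσ p hp
      by_cases hinf : {n | σ n ∈ C}.Infinite
      · exact Or.inl (hC _ (fun n => Nat.nth_mem_of_infinite hinf n)
          (hL σ _ (Nat.nth_strictMono hinf) hp))
      · have hfin : {n | σ n ∈ C}.Finite := Set.not_infinite.mp hinf
        have hBinf : {n | σ n ∈ B}.Infinite :=
          Set.Infinite.mono (fun n hn => (hσ n).resolve_left hn) hfin.infinite_compl
        exact Or.inr (hB _ (fun n => Nat.nth_mem_of_infinite hBinf n)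
          (hL σ _ (Nat.nth_strictMono hBinf) hp)))

/-- The limit operator associated to a topology `t`: it assigns to each sequence
the set of all its limits in `t`. -/
def assocLimOp {X : Type u} (t : TopologicalSpace X) : (ℕ → X) → Set X :=
  fun σ => {p | Filter.Tendsto σ Filter.atTop (@nhds X t p)}

theorem assocLimOp_isLimitOp {X : Type u} (t : TopologicalSpace X) :
    IsLimitOp (assocLimOp t) :=
  fun _σ _φ hφ _p hp => hp.comp hφ.tendsto_atTop

/-- `τ_Seq`: the topology derived from the limit operator associated to `t`. -/
def seqModTop {X : Type u} (t : TopologicalSpace X) : TopologicalSpace X :=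
  derivedTop (assocLimOp t) (assocLimOp_isLimitOp t)

/-- `L` is of first order on `D`. -/
def IsFirstOrderOpOn {X : Type u} (L : (ℕ → X) → Set X) (hL : IsLimitOp L)
    (D : Set X) : Prop :=
  ∀ σ : ℕ → X, (∀ n, σ n ∈ D) → ∀ p ∈ D,
    (p ∈ L σ ↔ Filter.Tendsto σ Filter.atTop (@nhds X (derivedTop L hL) p))

/-- `L` is of first order. -/
def IsFirstOrderOp {X : Type u} (L : (ℕ → X) → Set X) (hL : IsLimitOp L) : Prop :=
  ∀ (σ : ℕ → X) (p : X),
    p ∈ L σ ↔ Filter.Tendsto σ Filter.atTop (@nhds X (derivedTop L hL) p)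

/-- A limit operator is coherent if every constant sequence has its value as a limit. -/
def CoherentOp {X : Type u} (L : (ℕ → X) → Set X) : Prop :=
  ∀ x : X, x ∈ L (fun _ => x)

/-- The transfinite iterates of a limit operator: `L^1 σ = L σ` and, for `i ≠ 1`,
`L^i σ = {p | p ∈ L ρ for some sequence ρ with values in ⋃_{j<i} L^j σ}`. -/
noncomputable def iterOp {X : Type u} (L : (ℕ → X) → Set X) (σ : ℕ → X)
    (i : Ordinal.{0}) : Set X :=
  if i = 1 then L σ
  else {p | ∃ ρ : ℕ → X,
    (∀ n, ∃ j : Ordinal.{0}, ∃ _hj : j < i, ρ n ∈ iterOp L σ j) ∧ p ∈ L ρ}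
termination_by i

open Classical in
/-- The modified limit operator `L*` relative to a subset `D`. -/
noncomputable def modOp {X : Type u} (L : (ℕ → X) → Set X) (D : Set X) :
    (ℕ → X) → Set X := fun σ =>
  if ∃ φ : ℕ → ℕ, StrictMono φ ∧ ∃ p ∈ D, p ∈ L (σ ∘ φ) then L σ ∩ D else L σ

/-- The `D`-separating topology `τ*`: generated by the subbasis consisting of the
`t`-open sets together with the complements of compact subsets of `D`. -/
def sepTop {X : Type u} (t : TopologicalSpace X) (D : Set X) : TopologicalSpace X :=
  TopologicalSpace.generateFrom
    ({U : Set X | @IsOpen X t U} ∪ {V : Set X | ∃ K, K ⊆ D ∧ @IsCompact X t K ∧ V = Kᶜ})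

/-- Condition (A_Fin): `t'` refines `t`. -/
def AFin {X : Type u} (t t' : TopologicalSpace X) : Prop :=
  ∀ U : Set X, @IsOpen X t U → @IsOpen X t' U

/-- Condition (A_Sep): every `p ∈ D` and `q ∉ D` are separated by a `t`-open set
and a `t'`-open set. -/
def ASep {X : Type u} (t t' : TopologicalSpace X) (D : Set X) : Prop :=
  ∀ p ∈ D, ∀ q ∈ (Dᶜ : Set X), ∃ U V : Set X,
    @IsOpen X t U ∧ @IsOpen X t' V ∧ p ∈ U ∧ q ∈ V ∧ U ∩ V = ∅

/-- The restriction of a limit operator `L` to a subset `D`, as an operator on `↥D`: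
`L|_D(σ) = L(σ) ∩ D`. -/
def restrictOp {X : Type u} (L : (ℕ → X) → Set X) (D : Set X) :
    (ℕ → D) → Set D :=
  fun σ => {d : D | (d : X) ∈ L (fun n => (σ n : X))}

theorem isOpen_derivedTop_iff {X : Type u} {L : (ℕ → X) → Set X} (hL : IsLimitOp L)
    {U : Set X} : IsOpen[derivedTop L hL] U ↔ SeqClosedFor L Uᶜ :=
  Iff.rfl

theorem tendsto_derivedTop_of_mem {X : Type u} {L : (ℕ → X) → Set X} (hL : IsLimitOp L)
    {σ : ℕ → X} {p : X} (hp : p ∈ L σ) :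
    Tendsto σ atTop (@nhds X (derivedTop L hL) p) := by
  let _ := derivedTop L hL
  refine tendsto_nhds.2 fun U hU hpU => ?_
  -- Otherwise a subsequence stays in the `L`-closed set `Uᶜ` and still has the `L`-limit `p`.
  by_contra hev
  obtain ⟨φ, hφ, hφU⟩ := extraction_of_frequently_atTop (not_eventually.1 hev)
  exact (isOpen_derivedTop_iff hL).1 hU (σ ∘ φ) hφU (hL σ φ hφ hp) hpU

theorem stmt_1 {X : Type u} (L L' : (ℕ → X) → Set X)
    (hL : IsLimitOp L) (hL' : IsLimitOp L')
    (hfo : IsFirstOrderOp L hL)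
    (hsub : ∀ U : Set X, @IsOpen X (derivedTop L hL) U → @IsOpen X (derivedTop L' hL') U) :
    ∀ σ : ℕ → X, L' σ ⊆ L σ := by
  intro σ p hp
  have hle : derivedTop L' hL' ≤ derivedTop L hL := TopologicalSpace.le_def.2 hsub
  exact (hfo σ p).2 ((tendsto_derivedTop_of_mem hL' hp).mono_right (nhds_mono hle))
end

section
/- Let τ be a topology on a set X and let τ_Seq := τ_{L_τ} be the topology derived from the associated limit operator L_τ. Then L_τ is a limit operator of first order for τ_Seq: for every sequence σ in X and every point p ∈ X, the sequence σ converges to p in τ_Seq if and only if p ∈ L_τ(σ), i.e., if and only if σ converges to p in τ. -/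
open Set Filter Topology

universe u

theorem seqClosedFor_assocLimOp_iff {X : Type u} (t : TopologicalSpace X) {C : Set X} :
    SeqClosedFor (assocLimOp t) C ↔ @IsSeqClosed X t C :=
  ⟨fun hC _ _ hσ hp => hC _ hσ hp, fun hC _ hσ _ hp => hC hσ hp⟩

theorem seqModTop_le {X : Type u} (t : TopologicalSpace X) : seqModTop t ≤ t :=
  TopologicalSpace.le_def.mpr fun _ hU => (seqClosedFor_assocLimOp_iff t).mpr <|
    @IsClosed.isSeqClosed X t _ ((@isClosed_compl_iff X t _).mpr hU)

theorem stmt_4 {X : Type u} (t : TopologicalSpace X) :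
    ∀ (σ : ℕ → X) (p : X),
      (Filter.Tendsto σ Filter.atTop (@nhds X (seqModTop t) p) ↔ p ∈ assocLimOp t σ) ∧
      (p ∈ assocLimOp t σ ↔ Filter.Tendsto σ Filter.atTop (@nhds X t p)) :=
  fun _ _ =>
    ⟨⟨fun h => h.mono_right (nhds_mono (seqModTop_le t)),
      tendsto_derivedTop_of_mem (assocLimOp_isLimitOp t)⟩, Iff.rfl⟩
end

section
/- Let L be a limit operator on a set X and let D be an open subset of the topological space (X, τ_L). Define the restricted limit operator L|_D on D by L|_D(σ) := L(σ) ∩ D for every sequence σ with values in D. Then L|_D is a limit operator on D, and the subspace topology induced on D by τ_L coincides with the topology τ_{L|_D} on D derived from L|_D. -/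
open Set Filter Topology

universe u

namespace IsLimitOp

variable {X : Type u} {L : (ℕ → X) → Set X}

theorem isClosed_derivedTop_iff (hL : IsLimitOp L) (C : Set X) :
    @IsClosed X (derivedTop L hL) C ↔ SeqClosedFor L C := by
  rw [← @isOpen_compl_iff X _ (derivedTop L hL)]
  change SeqClosedFor L Cᶜᶜ ↔ _
  rw [compl_compl]

theorem restrictOp (hL : IsLimitOp L) (D : Set X) : IsLimitOp (restrictOp L D) :=
  fun σ φ hφ _ hd => hL (fun n => (σ n : X)) φ hφ hd

theorem exists_subseq_mem_of_frequently (hL : IsLimitOp L) {σ : ℕ → X} {A : Set X}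
    (h : ∃ᶠ n in atTop, σ n ∈ A) {p : X} (hp : p ∈ L σ) :
    ∃ φ : ℕ → ℕ, StrictMono φ ∧ (∀ n, σ (φ n) ∈ A) ∧ p ∈ L (σ ∘ φ) := by
  obtain ⟨φ, hφ, hA⟩ := extraction_of_frequently_atTop h
  exact ⟨φ, hφ, hA, hL σ φ hφ hp⟩

end IsLimitOp

section

variable {X : Type u} {L : (ℕ → X) → Set X} {D : Set X}

theorem SeqClosedFor.preimage_val {C : Set X} (hC : SeqClosedFor L C) :
    SeqClosedFor (restrictOp L D) (Subtype.val ⁻¹' C) :=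
  fun σ hσ _ hd => hC (fun n => (σ n : X)) hσ hd

/-- `{x | x ∈ D → x ∈ C}` is `↑C ∪ Dᶜ`. A sequence in it has a subsequence either in `Dᶜ`, whose
limits stay outside `D`, or in `↑C`, whose limits in `D` lie in `C`. -/
theorem SeqClosedFor.of_restrictOp (hL : IsLimitOp L) (hDc : SeqClosedFor L Dᶜ) {C : Set D}
    (hC : SeqClosedFor (restrictOp L D) C) :
    SeqClosedFor L {x | ∀ h : x ∈ D, (⟨x, h⟩ : D) ∈ C} := by
  intro σ hσ p hp hpD
  have hfreq : (∃ᶠ n in atTop, σ n ∈ D) ∨ ∃ᶠ n in atTop, σ n ∈ Dᶜ := by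
    rw [← frequently_or_distrib]
    exact Frequently.of_forall fun n => em (σ n ∈ D)
  rcases hfreq with hfreq | hfreq
  · obtain ⟨φ, -, hφD, hpφ⟩ := hL.exists_subseq_mem_of_frequently hfreq hp
    exact hC (fun n => ⟨σ (φ n), hφD n⟩) (fun n => hσ (φ n) (hφD n)) hpφ
  · obtain ⟨φ, -, hφD, hpφ⟩ := hL.exists_subseq_mem_of_frequently hfreq hp
    exact absurd hpD (hDc (σ ∘ φ) hφD hpφ)

end

theorem stmt_6 {X : Type u} (L : (ℕ → X) → Set X) (hL : IsLimitOp L)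
    (D : Set X) (hD : @IsOpen X (derivedTop L hL) D) :
    IsLimitOp (restrictOp L D) ∧
    ∀ hR : IsLimitOp (restrictOp L D),
      TopologicalSpace.induced (Subtype.val : D → X) (derivedTop L hL) =
        derivedTop (restrictOp L D) hR := by
  refine ⟨hL.restrictOp D, fun hR => TopologicalSpace.ext_isClosed fun C => ?_⟩
  have hDc : SeqClosedFor L Dᶜ :=
    (hL.isClosed_derivedTop_iff Dᶜ).mp (@IsOpen.isClosed_compl X (derivedTop L hL) D hD)
  rw [@isClosed_induced_iff _ _ (derivedTop L hL), hR.isClosed_derivedTop_iff]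
  constructor
  · rintro ⟨F, hF, rfl⟩
    exact ((hL.isClosed_derivedTop_iff F).mp hF).preimage_val
  · intro hC
    refine ⟨_, (hL.isClosed_derivedTop_iff _).mpr (.of_restrictOp hL hDc hC), ?_⟩
    ext d
    exact ⟨fun h => h d.2, fun h _ => h⟩
end

section
/- Let (X, τ) be a topological space and D ⊆ X an open subset that, with the subspace topology, is Hausdorff and locally compact. Let τ* be the topology on X generated by the subbasis τ ∪ {X \ K : K a compact subset of D}. Then: (a) τ ⊆ τ*; (b) for every p ∈ D and q ∈ X \ D there exist U ∈ τ and V ∈ τ* with p ∈ U, q ∈ V and U ∩ V = ∅; and (c) the subspace topologies induced on D by τ* and by τ coincide. -/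
open Set Filter Topology

universe u

section SepTop

variable {X : Type u} [t : TopologicalSpace X] {D : Set X}

theorem isOpen_sepTop_of_isOpen {U : Set X} (hU : IsOpen U) : IsOpen[sepTop t D] U :=
  TopologicalSpace.isOpen_generateFrom_of_mem (Or.inl hU)

theorem isOpen_sepTop_compl {K : Set X} (hKD : K ⊆ D) (hK : IsCompact K) :
    IsOpen[sepTop t D] Kᶜ :=
  TopologicalSpace.isOpen_generateFrom_of_mem (Or.inr ⟨K, hKD, hK, rfl⟩)

theorem sepTop_le : sepTop t D ≤ t := fun _ => isOpen_sepTop_of_isOpen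

theorem exists_isCompact_subset_mem_nhds_of_isOpen [LocallyCompactSpace D] (hD : IsOpen D)
    {p : X} (hp : p ∈ D) : ∃ K, IsCompact K ∧ K ⊆ D ∧ K ∈ 𝓝 p := by
  obtain ⟨K, hK, hKp⟩ := exists_compact_mem_nhds (⟨p, hp⟩ : D)
  exact ⟨(↑) '' K, hK.image continuous_subtype_val, Subtype.coe_image_subset D K,
    hD.isOpenMap_subtype_val.image_mem_nhds hKp⟩

theorem aSep_sepTop [LocallyCompactSpace D] (hD : IsOpen D) : ASep t (sepTop t D) D := by
  intro p hp q hq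
  obtain ⟨K, hK, hKD, hKp⟩ := exists_isCompact_subset_mem_nhds_of_isOpen hD hp
  exact ⟨interior K, Kᶜ, isOpen_interior, isOpen_sepTop_compl hKD hK,
    mem_interior_iff_mem_nhds.2 hKp, fun hqK => hq (hKD hqK),
    (disjoint_compl_right.mono_left interior_subset).inter_eq⟩

theorem isCompact_preimage_val {K : Set X} (hKD : K ⊆ D) (hK : IsCompact K) :
    IsCompact (((↑) : D → X) ⁻¹' K) := by
  rwa [Subtype.isCompact_iff, image_preimage_eq_of_subset (by simpa using hKD)]

/-- Compact subsets of `D` are closed in the Hausdorff space `D`, so their complements are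
already open in the subspace topology of `t`. -/
theorem induced_sepTop_eq [T2Space D] :
    TopologicalSpace.induced ((↑) : D → X) (sepTop t D) = TopologicalSpace.induced (↑) t := by
  refine le_antisymm (induced_mono sepTop_le) ?_
  rw [sepTop, induced_generateFrom_eq]
  refine le_generateFrom ?_
  rintro _ ⟨U, hU | ⟨K, hKD, hK, rfl⟩, rfl⟩
  · exact isOpen_induced hU
  · exact (isCompact_preimage_val hKD hK).isClosed.isOpen_compl

end SepTop

theorem stmt_8 {X : Type u} (t : TopologicalSpace X) (D : Set X)
    (hD : @IsOpen X t D)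
    (hT2 : @T2Space D (TopologicalSpace.induced (Subtype.val : D → X) t))
    (hLC : @LocallyCompactSpace D (TopologicalSpace.induced (Subtype.val : D → X) t)) :
    AFin t (sepTop t D) ∧
    ASep t (sepTop t D) D ∧
    TopologicalSpace.induced (Subtype.val : D → X) (sepTop t D) =
      TopologicalSpace.induced (Subtype.val : D → X) t :=
  ⟨sepTop_le, aSep_sepTop hD, induced_sepTop_eq⟩
end

section
/- Let L and L' be limit operators on a set X with derived topologies τ_L and τ_{L'}, let D ⊆ X be open, locally compact and Hausdorff for τ_L, and assume τ_L ⊆ τ_{L'}. If the topology τ_{L'} satisfies (A_Sep) with respect to (τ_L, D), then for every sequence σ in X: if L'(σ) ∩ D ≠ ∅ then L'(σ) ⊆ D. -/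
open Set Filter Topology

universe u

/-! If `p ∈ L' σ ∩ D` and `q ∈ L' σ \ D`, separate them by a `τ_L`-open `U ∋ p`, which is also
`τ_{L'}`-open, and a disjoint `τ_{L'}`-open `V ∋ q`. Since `p` is an `L'`-limit, `σ` lies in `U`
infinitely often; the limits of that subsequence include `q` and lie in the `τ_{L'}`-closure
of `U`, which `V` misses. -/

section DerivedTop

variable {X : Type u} {L : (ℕ → X) → Set X} {hL : IsLimitOp L}

theorem isClosed_derivedTop_iff {C : Set X} :
    IsClosed[derivedTop L hL] C ↔ SeqClosedFor L C := by
  let _ := derivedTop L hL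
  rw [← isOpen_compl_iff]
  change SeqClosedFor L Cᶜᶜ ↔ _
  rw [compl_compl]

theorem frequently_mem_of_mem_limOp {σ : ℕ → X} {p : X} (hp : p ∈ L σ) {U : Set X}
    (hU : IsOpen[derivedTop L hL] U) (hpU : p ∈ U) : ∃ᶠ n in atTop, σ n ∈ U := by
  let _ := derivedTop L hL
  intro hev
  obtain ⟨N, hN⟩ := eventually_atTop.mp hev
  have hshift : StrictMono (· + N) := fun _ _ h => Nat.add_lt_add_right h N
  have hclosed := isClosed_derivedTop_iff.mp (isClosed_compl_iff.mpr hU)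
  exact hclosed (σ ∘ (· + N)) (fun n => hN _ (Nat.le_add_left N n)) (hL σ _ hshift hp) hpU

-- The terms of `σ` in `U` form a subsequence, and limits only grow under subsequences.
theorem limOp_subset_closure {σ : ℕ → X} {p : X} (hp : p ∈ L σ) {U : Set X}
    (hU : IsOpen[derivedTop L hL] U) (hpU : p ∈ U) :
    L σ ⊆ closure[derivedTop L hL] U := by
  let _ := derivedTop L hL
  obtain ⟨φ, hφ, hφU⟩ := extraction_of_frequently_atTop (frequently_mem_of_mem_limOp hp hU hpU)
  have hclosed := isClosed_derivedTop_iff.mp (isClosed_closure (X := X) (s := U))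
  exact (hL σ φ hφ).trans (hclosed (σ ∘ φ) fun n => subset_closure (hφU n))

end DerivedTop

theorem stmt_11_general {X : Type u} (L L' : (ℕ → X) → Set X)
    (hL : IsLimitOp L) (hL' : IsLimitOp L') (D : Set X)
    (hfin : AFin (derivedTop L hL) (derivedTop L' hL'))
    (hsep : ASep (derivedTop L hL) (derivedTop L' hL') D) :
    ∀ σ : ℕ → X, (L' σ ∩ D).Nonempty → L' σ ⊆ D := by
  rintro σ ⟨p, hpσ, hpD⟩ q hqσ
  by_contra hqD
  let _ := derivedTop L' hL'
  obtain ⟨U, V, hU, hV, hpU, hqV, hUV⟩ := hsep p hpD q hqD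
  have hq : q ∈ closure[derivedTop L' hL'] U := limOp_subset_closure hpσ (hfin U hU) hpU hqσ
  exact (mem_closure_iff.mp hq V hV hqV).ne_empty (by rw [inter_comm, hUV])

theorem stmt_11 {X : Type u} (L L' : (ℕ → X) → Set X)
    (hL : IsLimitOp L) (hL' : IsLimitOp L') (D : Set X)
    (hD : @IsOpen X (derivedTop L hL) D)
    (hT2 : @T2Space D (TopologicalSpace.induced (Subtype.val : D → X) (derivedTop L hL)))
    (hLC : @LocallyCompactSpace D (TopologicalSpace.induced (Subtype.val : D → X) (derivedTop L hL)))
    (hfin : AFin (derivedTop L hL) (derivedTop L' hL'))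
    (hsep : ASep (derivedTop L hL) (derivedTop L' hL') D) :
    ∀ σ : ℕ → X, (L' σ ∩ D).Nonempty → L' σ ⊆ D :=
  stmt_11_general L L' hL hL' D hfin hsep
end
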